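/- arXiv:1311.3019 — 4 statements merged into one kernel-verified Lean document; each statement's English description precedes it below -/
import Mathlib

section
/- For every q > 0, the equation ψ(λ) = q (for λ ≠ −ρ), equivalently the cubic equation P(λ) = 0 where P(λ) = (ρ+λ)((σ²/2)λ² + μλ − q) − aλ, has exactly three real solutions β < α < Φ(q), and they satisfy β < −ρ < α < 0 < Φ(q); in particular Φ(q) is the unique solution in (0, ∞). -/
open Real Set

lemma cubic_roots_iff (c b d e β α Φ : ℝ) (hc : c ≠ 0) (h1 : β < α) (h2 : α < Φ)
    (e1 : c*β^3 + b*β^2 + d*β + e = 0)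
    (e2 : c*α^3 + b*α^2 + d*α + e = 0)
    (e3 : c*Φ^3 + b*Φ^2 + d*Φ + e = 0) (x : ℝ) :
    c*x^3 + b*x^2 + d*x + e = 0 ↔ (x = β ∨ x = α ∨ x = Φ) := by
  have hβα : β - α ≠ 0 := sub_ne_zero.mpr h1.ne
  have hαΦ : α - Φ ≠ 0 := sub_ne_zero.mpr h2.ne
  have hβΦ : β - Φ ≠ 0 := sub_ne_zero.mpr (h1.trans h2).ne
  have F12 : c*(β^2 + β*α + α^2) + b*(β + α) + d = 0 := by
    have h : (β - α) * (c*(β^2 + β*α + α^2) + b*(β + α) + d) = 0 := by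
      linear_combination e1 - e2
    exact (mul_eq_zero.mp h).resolve_left hβα
  have F23 : c*(α^2 + α*Φ + Φ^2) + b*(α + Φ) + d = 0 := by
    have h : (α - Φ) * (c*(α^2 + α*Φ + Φ^2) + b*(α + Φ) + d) = 0 := by
      linear_combination e2 - e3
    exact (mul_eq_zero.mp h).resolve_left hαΦ
  have hb : c*(β + α + Φ) + b = 0 := by
    have h : (β - Φ) * (c*(β + α + Φ) + b) = 0 := by
      linear_combination F12 - F23
    exact (mul_eq_zero.mp h).resolve_left hβΦ
  have hd : d - c*(β*α + β*Φ + α*Φ) = 0 := by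
    linear_combination F12 - (β + α) * hb
  have he : e + c*(β*α*Φ) = 0 := by
    linear_combination e1 - β^2 * hb - β * hd
  constructor
  · intro h
    have key : c * ((x - β) * ((x - α) * (x - Φ))) = 0 := by
      linear_combination h - x^2 * hb - x * hd - he
    rcases mul_eq_zero.mp key with h' | h'
    · exact absurd h' hc
    rcases mul_eq_zero.mp h' with h' | h'
    · exact Or.inl (sub_eq_zero.mp h')
    rcases mul_eq_zero.mp h' with h' | h'
    · exact Or.inr (Or.inl (sub_eq_zero.mp h'))
    · exact Or.inr (Or.inr (sub_eq_zero.mp h'))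
  · rintro (rfl | rfl | rfl) <;> assumption

/-- Let σ > 0, μ ≥ 0, a > 0, ρ > 0 and
ψ(λ) = (σ²/2)λ² + μλ − aλ/(ρ+λ) for λ ≠ −ρ.  For every q > 0 the equation ψ(λ) = q
(for λ ≠ −ρ), equivalently (ρ+λ)((σ²/2)λ² + μλ − q) − aλ = 0, has exactly three real
solutions β < α < Φ(q), satisfying β < −ρ < α < 0 < Φ(q); in particular Φ(q) is the
unique solution in (0, ∞). -/
theorem stmt_3 (σ μ a ρ q : ℝ) (hσ : 0 < σ) (hμ : 0 ≤ μ) (ha : 0 < a) (hρ : 0 < ρ)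
    (hq : 0 < q) :
    ∃ β α Φ : ℝ, β < -ρ ∧ -ρ < α ∧ α < 0 ∧ 0 < Φ ∧ β < α ∧ α < Φ ∧
      (∀ lam : ℝ, lam ≠ -ρ →
        (σ ^ 2 / 2 * lam ^ 2 + μ * lam - a * lam / (ρ + lam) = q ↔
          lam = β ∨ lam = α ∨ lam = Φ)) ∧
      (∀ lam : ℝ,
        (ρ + lam) * (σ ^ 2 / 2 * lam ^ 2 + μ * lam - q) - a * lam = 0 ↔
          lam = β ∨ lam = α ∨ lam = Φ) ∧
      (∀ lam : ℝ, 0 < lam →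
        (σ ^ 2 / 2 * lam ^ 2 + μ * lam - a * lam / (ρ + lam) = q ↔ lam = Φ)) := by
  set c : ℝ := σ^2/2 with hcdef
  have hc : 0 < c := by positivity
  set f : ℝ → ℝ := fun x => (ρ + x) * (c * x^2 + μ * x - q) - a * x with hfdef
  have hfcont : Continuous f := by fun_prop
  -- evaluation points
  have hfρ : f (-ρ) = a * ρ := by simp only [hfdef]; ring
  have hf0 : f 0 = -(ρ * q) := by simp only [hfdef]; ring
  set M : ℝ := max 1 ((q + a)/c) with hMdef
  have hM1 : (1:ℝ) ≤ M := le_max_left _ _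
  have hM2 : (q + a)/c ≤ M := le_max_right _ _
  have hM2' : q + a ≤ c * M := by rw [div_le_iff₀ hc] at hM2; linarith [hM2]
  have hM0 : 0 < M := by linarith
  have hfM : 0 < f M := by
    have h1 : q + a ≤ c * M^2 := by
      nlinarith [mul_le_mul_of_nonneg_right hM2' hM0.le, mul_pos hc hM0]
    have h2 : a ≤ c * M^2 + μ * M - q := by
      nlinarith [mul_nonneg hμ hM0.le]
    simp only [hfdef]
    nlinarith [mul_le_mul_of_nonneg_left h2 (show (0:ℝ) ≤ ρ + M by linarith),
      mul_pos ha hρ]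
  set N : ℝ := max (ρ + 1) (max 1 ((μ + a + q)/c)) with hNdef
  have hN1 : ρ + 1 ≤ N := le_max_left _ _
  have hN2 : (1:ℝ) ≤ N := le_trans (le_max_left _ _) (le_max_right _ _)
  have hN3 : (μ + a + q)/c ≤ N := le_trans (le_max_right _ _) (le_max_right _ _)
  have hN3' : μ + a + q ≤ c * N := by rw [div_le_iff₀ hc] at hN3; linarith [hN3]
  have hN0 : 0 < N := by linarith
  have hfN : f (-N) < 0 := by
    simp only [hfdef]
    nlinarith [mul_le_mul_of_nonneg_left hN3' hN0.le, mul_pos ha hN0, mul_pos hq hN0,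
      mul_nonneg hμ hN0.le]
  -- roots by IVT
  obtain ⟨β, hβmem, hβ⟩ :=
    intermediate_value_Ioo (by linarith : -N ≤ -ρ) hfcont.continuousOn
      (by rw [hfρ]; exact ⟨hfN, by positivity⟩ : (0:ℝ) ∈ Ioo (f (-N)) (f (-ρ)))
  obtain ⟨α, hαmem, hα⟩ :=
    intermediate_value_Ioo' (by linarith : -ρ ≤ 0) hfcont.continuousOn
      (by rw [hfρ, hf0]; constructor <;> [nlinarith; positivity] :
        (0:ℝ) ∈ Ioo (f 0) (f (-ρ)))
  obtain ⟨Φ, hΦmem, hΦ⟩ :=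
    intermediate_value_Ioo (by linarith : (0:ℝ) ≤ M) hfcont.continuousOn
      (by rw [hf0]; constructor <;> nlinarith : (0:ℝ) ∈ Ioo (f 0) (f M))
  have hβρ : β < -ρ := hβmem.2
  have hρα : -ρ < α := hαmem.1
  have hα0 : α < 0 := hαmem.2
  have h0Φ : 0 < Φ := hΦmem.1
  have hβα : β < α := hβρ.trans hρα
  have hαΦ : α < Φ := hα0.trans h0Φ
  have hexp : ∀ x : ℝ, f x = c*x^3 + (c*ρ + μ)*x^2 + (μ*ρ - q - a)*x + (-(ρ*q)) := by
    intro x; simp only [hfdef]; ring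
  have e1 := hβ; have e2 := hα; have e3 := hΦ
  rw [hexp] at e1 e2 e3
  have key : ∀ x : ℝ, c*x^3 + (c*ρ + μ)*x^2 + (μ*ρ - q - a)*x + (-(ρ*q)) = 0 ↔
      (x = β ∨ x = α ∨ x = Φ) :=
    fun x => cubic_roots_iff c (c*ρ + μ) (μ*ρ - q - a) (-(ρ*q)) β α Φ hc.ne' hβα hαΦ e1 e2 e3 x
  have keyP : ∀ lam : ℝ,
      (ρ + lam) * (σ ^ 2 / 2 * lam ^ 2 + μ * lam - q) - a * lam = 0 ↔
        lam = β ∨ lam = α ∨ lam = Φ := by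
    intro lam
    rw [show (ρ + lam) * (σ ^ 2 / 2 * lam ^ 2 + μ * lam - q) - a * lam
        = c*lam^3 + (c*ρ + μ)*lam^2 + (μ*ρ - q - a)*lam + (-(ρ*q)) by rw [hcdef]; ring]
    exact key lam
  have keyPsi : ∀ lam : ℝ, lam ≠ -ρ →
      (σ ^ 2 / 2 * lam ^ 2 + μ * lam - a * lam / (ρ + lam) = q ↔
        lam = β ∨ lam = α ∨ lam = Φ) := by
    intro lam hlam
    have hne : ρ + lam ≠ 0 := by
      intro h; apply hlam; linarith [h]
    rw [← keyP lam]
    constructor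
    · intro h
      field_simp at h
      linear_combination h / 2
    · intro h
      field_simp
      linear_combination 2 * h
  refine ⟨β, α, Φ, hβρ, hρα, hα0, h0Φ, hβα, hαΦ, keyPsi, keyP, ?_⟩
  intro lam hlam
  have hlam' : lam ≠ -ρ := by intro h; rw [h] at hlam; linarith
  rw [keyPsi lam hlam']
  constructor
  · rintro (rfl | rfl | h)
    · linarith
    · linarith
    · exact h
  · exact fun h => Or.inr (Or.inr h)
end

section
/- At the three real solutions β < −ρ < α < 0 < Φ(q) of ψ(λ) = q, the derivative of ψ satisfies ψ'(β) < 0, ψ'(α) < 0, and ψ'(Φ(q)) > 0. -/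
/-!
Clearing the denominator, ψ(λ) = q becomes the cubic equation P(λ) = 0 with
P(λ) = (ρ + λ)(ψ(λ) - q), whose leading coefficient is σ²/2. Its three roots are β₀, α, Φ(q),
so P'(r) = (σ²/2)(r - s)(r - t) at a root r with s, t the other two roots. By the product rule
P'(r) = (ρ + r) ψ'(r), and the sign of ψ'(r) is read off from the signs of r - s, r - t and ρ + r.
-/

lemma cubic_deriv_eq_of_three_roots {c b d e r s t : ℝ} (hrs : r ≠ s) (hrt : r ≠ t) (hst : s ≠ t)
    (hr : c * r ^ 3 + b * r ^ 2 + d * r + e = 0)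
    (hs : c * s ^ 3 + b * s ^ 2 + d * s + e = 0)
    (ht : c * t ^ 3 + b * t ^ 2 + d * t + e = 0) :
    3 * c * r ^ 2 + 2 * b * r + d = c * (r - s) * (r - t) := by
  have hrs' : c * (r ^ 2 + r * s + s ^ 2) + b * (r + s) + d = 0 := by
    refine (mul_eq_zero.mp ?_).resolve_left (sub_ne_zero.mpr hrs)
    linear_combination hr - hs
  have hrt' : c * (r ^ 2 + r * t + t ^ 2) + b * (r + t) + d = 0 := by
    refine (mul_eq_zero.mp ?_).resolve_left (sub_ne_zero.mpr hrt)
    linear_combination hr - ht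
  have hsum : c * (r + s + t) + b = 0 := by
    refine (mul_eq_zero.mp ?_).resolve_left (sub_ne_zero.mpr hst)
    linear_combination hrs' - hrt'
  linear_combination hrs' + (r - s) * hsum

namespace LaplaceExponent

variable (σ μ a ρ : ℝ)

noncomputable def psi (x : ℝ) : ℝ := σ ^ 2 / 2 * x ^ 2 + μ * x - a * x / (ρ + x)

variable {σ μ a ρ}

lemma hasDerivAt_psi {r : ℝ} (hr : ρ + r ≠ 0) :
    HasDerivAt (psi σ μ a ρ) (σ ^ 2 * r + μ - a * ρ / (ρ + r) ^ 2) r := by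
  have hquad : HasDerivAt (fun x : ℝ => σ ^ 2 / 2 * x ^ 2 + μ * x) (σ ^ 2 * r + μ) r :=
    (((hasDerivAt_pow 2 r).const_mul (σ ^ 2 / 2)).add
      ((hasDerivAt_id' r).const_mul μ)).congr_deriv (by ring)
  have hfrac : HasDerivAt (fun x : ℝ => a * x / (ρ + x)) (a * ρ / (ρ + r) ^ 2) r :=
    (((hasDerivAt_id' r).const_mul a).div ((hasDerivAt_id' r).const_add ρ) hr).congr_deriv
      (by ring)
  exact hquad.sub hfrac

lemma cubic_eq_zero_of_psi_eq {q r : ℝ} (hr : ρ + r ≠ 0) (h : psi σ μ a ρ r = q) :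
    σ ^ 2 / 2 * r ^ 3 + (μ + σ ^ 2 * ρ / 2) * r ^ 2 + (μ * ρ - a - q) * r - q * ρ = 0 := by
  have hcancel : a * r / (ρ + r) * (ρ + r) = a * r := div_mul_cancel₀ _ hr
  unfold psi at h
  linear_combination (ρ + r) * h + hcancel

lemma mul_deriv_psi_of_psi_eq {q r : ℝ} (hr : ρ + r ≠ 0) (h : psi σ μ a ρ r = q) :
    (ρ + r) * deriv (psi σ μ a ρ) r
      = 3 * (σ ^ 2 / 2) * r ^ 2 + 2 * (μ + σ ^ 2 * ρ / 2) * r + (μ * ρ - a - q) := by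
  have hcancel : a * ρ / (ρ + r) ^ 2 * (ρ + r) ^ 2 = a * ρ := div_mul_cancel₀ _ (pow_ne_zero 2 hr)
  have hcubic := cubic_eq_zero_of_psi_eq hr h
  rw [(hasDerivAt_psi hr).deriv]
  refine mul_left_cancel₀ hr ?_
  linear_combination -hcubic - hcancel

lemma mul_deriv_psi_of_three_roots {q r s t : ℝ} (hrs : r ≠ s) (hrt : r ≠ t) (hst : s ≠ t)
    (hρr : ρ + r ≠ 0) (hρs : ρ + s ≠ 0) (hρt : ρ + t ≠ 0)
    (hr : psi σ μ a ρ r = q) (hs : psi σ μ a ρ s = q) (ht : psi σ μ a ρ t = q) :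
    (ρ + r) * deriv (psi σ μ a ρ) r = σ ^ 2 / 2 * (r - s) * (r - t) := by
  rw [mul_deriv_psi_of_psi_eq hρr hr]
  exact cubic_deriv_eq_of_three_roots hrs hrt hst (cubic_eq_zero_of_psi_eq hρr hr)
    (cubic_eq_zero_of_psi_eq hρs hs) (cubic_eq_zero_of_psi_eq hρt ht)

end LaplaceExponent

open LaplaceExponent in
theorem stmt_5_general (σ μ a ρ q β₀ α Φq : ℝ) (ψ : ℝ → ℝ)
    (hσ : 0 < σ)
    (hψ : ∀ lam : ℝ, ψ lam = σ ^ 2 / 2 * lam ^ 2 + μ * lam - a * lam / (ρ + lam))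
    (hβρ : β₀ < -ρ) (hρα : -ρ < α) (hα0 : α < 0) (hΦ : 0 < Φq)
    (hrβ : ψ β₀ = q) (hrα : ψ α = q) (hrΦ : ψ Φq = q) :
    deriv ψ β₀ < 0 ∧ deriv ψ α < 0 ∧ 0 < deriv ψ Φq := by
  obtain rfl : ψ = psi σ μ a ρ := funext hψ
  have hc : 0 < σ ^ 2 / 2 := by positivity
  have hρβ : ρ + β₀ ≠ 0 := by linarith
  have hρα' : ρ + α ≠ 0 := by linarith
  have hρΦ : ρ + Φq ≠ 0 := by linarith
  have hβα : β₀ ≠ α := by linarith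
  have hβΦ : β₀ ≠ Φq := by linarith
  have hαΦ : α ≠ Φq := by linarith
  have dβ := mul_deriv_psi_of_three_roots hβα hβΦ hαΦ hρβ hρα' hρΦ hrβ hrα hrΦ
  have dα := mul_deriv_psi_of_three_roots hβα.symm hαΦ hβΦ hρα' hρβ hρΦ hrα hrβ hrΦ
  have dΦ := mul_deriv_psi_of_three_roots hβΦ.symm hαΦ.symm hβα hρΦ hρβ hρα' hrΦ hrβ hrα
  refine ⟨neg_of_mul_pos_right (a := ρ + β₀) ?_ (by linarith),
    neg_of_mul_neg_right (a := ρ + α) ?_ (by linarith),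
    pos_of_mul_pos_right (a := ρ + Φq) ?_ (by linarith)⟩
  · rw [dβ]; exact mul_pos_of_neg_of_neg (mul_neg_of_pos_of_neg hc (by linarith)) (by linarith)
  · rw [dα]; exact mul_neg_of_pos_of_neg (mul_pos hc (by linarith)) (by linarith)
  · rw [dΦ]; exact mul_pos (mul_pos hc (by linarith)) (by linarith)

/-- With ψ(λ) = (σ²/2)λ² + μλ − aλ/(ρ+λ) and the three real solutions
β₀ < −ρ < α < 0 < Φ(q) of ψ(λ) = q, the derivative of ψ satisfies
ψ'(β₀) < 0, ψ'(α) < 0 and ψ'(Φ(q)) > 0. -/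
theorem stmt_5 (σ μ a ρ q β₀ α Φq : ℝ) (ψ : ℝ → ℝ)
    (hσ : 0 < σ) (hμ : 0 ≤ μ) (ha : 0 < a) (hρ : 0 < ρ) (hq : 0 < q)
    (hψ : ∀ lam : ℝ, ψ lam = σ ^ 2 / 2 * lam ^ 2 + μ * lam - a * lam / (ρ + lam))
    (hβρ : β₀ < -ρ) (hρα : -ρ < α) (hα0 : α < 0) (hΦ : 0 < Φq)
    (hrβ : ψ β₀ = q) (hrα : ψ α = q) (hrΦ : ψ Φq = q) :
    deriv ψ β₀ < 0 ∧ deriv ψ α < 0 ∧ 0 < deriv ψ Φq :=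
  stmt_5_general σ μ a ρ q β₀ α Φq ψ hσ hψ hβρ hρα hα0 hΦ hrβ hrα hrΦ
end

section
/- For every real β > Φ(q), the Laplace transform of the q-scale function satisfies ∫_0^∞ e^{−βx} W^{(q)}(x) dx = 1/(ψ(β) − q). -/
/-!
Clearing the pole at `-ρ`, `(ψ λ - q)(ρ + λ)` is a cubic with leading coefficient `σ²/2` and the
three roots `β₀ < α < Φ(q)`, so `ψ λ - q = (σ²/2)(λ - β₀)(λ - α)(λ - Φ(q)) / (ρ + λ)`. Hence
`ψ'(r) = (σ²/2) ∏_{s ≠ r} (r - s) / (ρ + r)` at each root `r`, and `1 / ψ'(r)` is exactly the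
residue of `1 / (ψ - q)` at `r`. Since `∫₀^∞ e^{-βx} e^{rx} dx = 1 / (β - r)` for `r < β`, the
Laplace transform of `W^{(q)}` is the partial fraction expansion of `1 / (ψ(β) - q)`.
-/

open Real Set MeasureTheory Filter Topology

lemma integral_Ioi_exp_neg_mul_mul_sum_exp_div {β r₁ r₂ r₃ : ℝ} (h₁ : r₁ < β) (h₂ : r₂ < β)
    (h₃ : r₃ < β) (d₁ d₂ d₃ : ℝ) :
    ∫ x in Ioi (0 : ℝ), exp (-β * x) * (exp (r₁ * x) / d₁ + exp (r₂ * x) / d₂ + exp (r₃ * x) / d₃)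
      = 1 / (d₁ * (β - r₁)) + 1 / (d₂ * (β - r₂)) + 1 / (d₃ * (β - r₃)) := by
  have hexp : ∀ r x : ℝ, exp (-β * x) * exp (r * x) = exp ((r - β) * x) := fun r x => by
    rw [← exp_add]; ring_nf
  have hint : ∀ r, r < β → ∀ d : ℝ,
      IntegrableOn (fun x => exp ((r - β) * x) / d) (Ioi 0) := fun r h d =>
    (integrableOn_exp_mul_Ioi (sub_neg.2 h) 0).div_const d
  have hval : ∀ r, r < β → ∀ d : ℝ,
      ∫ x in Ioi (0 : ℝ), exp ((r - β) * x) / d = 1 / (d * (β - r)) := by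
    intro r h d
    rw [integral_div, integral_exp_mul_Ioi (sub_neg.2 h), mul_zero, exp_zero, div_div,
      ← neg_div_neg_eq, neg_neg, neg_mul_eq_neg_mul, neg_sub, mul_comm]
  simp_rw [mul_add, mul_div_assoc', hexp]
  rw [integral_add _ (hint _ h₃ _), integral_add (hint _ h₁ _) (hint _ h₂ _), hval _ h₁,
    hval _ h₂, hval _ h₃]
  exact (hint _ h₁ _).add (hint _ h₂ _)

lemma hasDerivAt_sub_mul {g : ℝ → ℝ} {g' r : ℝ} (hg : HasDerivAt g g' r) :
    HasDerivAt (fun x => (x - r) * g x) (g r) r := by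
  simpa using ((hasDerivAt_id' r).sub_const r).fun_mul hg

lemma deriv_eq_of_eventuallyEq_add_sub_mul {f g : ℝ → ℝ} {q r : ℝ} (hg : DifferentiableAt ℝ g r)
    (hf : f =ᶠ[𝓝 r] fun x => q + (x - r) * g x) : deriv f r = g r :=
  (hasDerivAt_sub_mul hg.hasDerivAt).const_add q |>.congr_of_eventuallyEq hf |>.deriv

lemma cubic_eq_mul_prod_sub_of_roots {c₃ c₂ c₁ c₀ r₁ r₂ r₃ : ℝ}
    (h₁₂ : r₁ ≠ r₂) (h₁₃ : r₁ ≠ r₃) (h₂₃ : r₂ ≠ r₃)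
    (hr₁ : c₃ * r₁ ^ 3 + c₂ * r₁ ^ 2 + c₁ * r₁ + c₀ = 0)
    (hr₂ : c₃ * r₂ ^ 3 + c₂ * r₂ ^ 2 + c₁ * r₂ + c₀ = 0)
    (hr₃ : c₃ * r₃ ^ 3 + c₂ * r₃ ^ 2 + c₁ * r₃ + c₀ = 0) (x : ℝ) :
    c₃ * x ^ 3 + c₂ * x ^ 2 + c₁ * x + c₀ = c₃ * ((x - r₁) * (x - r₂) * (x - r₃)) := by
  have hV : (r₁ - r₂) * (r₁ - r₃) * (r₂ - r₃) ≠ 0 := by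
    simp only [ne_eq, mul_eq_zero, sub_eq_zero, not_or]
    exact ⟨⟨h₁₂, h₁₃⟩, h₂₃⟩
  -- Lagrange interpolation of the difference, a polynomial of degree ≤ 2, at the three roots
  have : (c₃ * x ^ 3 + c₂ * x ^ 2 + c₁ * x + c₀ - c₃ * ((x - r₁) * (x - r₂) * (x - r₃)))
      * ((r₁ - r₂) * (r₁ - r₃) * (r₂ - r₃)) = 0 := by
    linear_combination (x - r₂) * (x - r₃) * (r₂ - r₃) * hr₁
      - (x - r₁) * (x - r₃) * (r₁ - r₃) * hr₂ + (x - r₁) * (x - r₂) * (r₁ - r₂) * hr₃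
  exact sub_eq_zero.1 ((mul_eq_zero.1 this).resolve_right hV)

lemma deriv_eq_of_sub_eq_mul_prod_div {f : ℝ → ℝ} {c ρ q r₁ r₂ r₃ : ℝ}
    (hf : ∀ x, ρ + x ≠ 0 → f x - q = c * ((x - r₁) * (x - r₂) * (x - r₃)) / (ρ + x))
    (hr₁ : ρ + r₁ ≠ 0) : deriv f r₁ = c * (r₁ - r₂) * (r₁ - r₃) / (ρ + r₁) := by
  refine deriv_eq_of_eventuallyEq_add_sub_mul (q := q)
    (g := fun x => c * (x - r₂) * (x - r₃) / (ρ + x))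
    (by fun_prop (disch := exact hr₁)) ?_
  filter_upwards [(continuous_const_add ρ).continuousAt.eventually_ne hr₁] with x hx
  linear_combination hf x hx

lemma sub_mul_eq_cubic {σ μ a ρ q : ℝ} {ψ : ℝ → ℝ}
    (hψ : ∀ lam : ℝ, ψ lam = σ ^ 2 / 2 * lam ^ 2 + μ * lam - a * lam / (ρ + lam))
    {x : ℝ} (hx : ρ + x ≠ 0) :
    (ψ x - q) * (ρ + x) =
      σ ^ 2 / 2 * x ^ 3 + (σ ^ 2 / 2 * ρ + μ) * x ^ 2 + (μ * ρ - a - q) * x + -(q * ρ) := by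
  rw [hψ]
  field_simp
  ring

lemma sub_eq_mul_prod_div_of_roots {σ μ a ρ q : ℝ} {ψ : ℝ → ℝ}
    (hψ : ∀ lam : ℝ, ψ lam = σ ^ 2 / 2 * lam ^ 2 + μ * lam - a * lam / (ρ + lam))
    {r₁ r₂ r₃ : ℝ} (h₁₂ : r₁ ≠ r₂) (h₁₃ : r₁ ≠ r₃) (h₂₃ : r₂ ≠ r₃)
    (hρ₁ : ρ + r₁ ≠ 0) (hρ₂ : ρ + r₂ ≠ 0) (hρ₃ : ρ + r₃ ≠ 0)
    (hr₁ : ψ r₁ = q) (hr₂ : ψ r₂ = q) (hr₃ : ψ r₃ = q) {x : ℝ} (hx : ρ + x ≠ 0) :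
    ψ x - q = σ ^ 2 / 2 * ((x - r₁) * (x - r₂) * (x - r₃)) / (ρ + x) := by
  have hroot : ∀ r, ρ + r ≠ 0 → ψ r = q →
      σ ^ 2 / 2 * r ^ 3 + (σ ^ 2 / 2 * ρ + μ) * r ^ 2 + (μ * ρ - a - q) * r + -(q * ρ) = 0 :=
    fun r hρr hr => by rw [← sub_mul_eq_cubic hψ hρr, hr, sub_self, zero_mul]
  rw [← cubic_eq_mul_prod_sub_of_roots h₁₂ h₁₃ h₂₃ (hroot _ hρ₁ hr₁) (hroot _ hρ₂ hr₂)
    (hroot _ hρ₃ hr₃), ← sub_mul_eq_cubic hψ hx, mul_div_cancel_right₀ _ hx]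

lemma partial_fractions_of_three_roots {c ρ r₁ r₂ r₃ β : ℝ} (hc : c ≠ 0)
    (h₁₂ : r₁ ≠ r₂) (h₁₃ : r₁ ≠ r₃) (h₂₃ : r₂ ≠ r₃) (hβ₁ : β ≠ r₁) (hβ₂ : β ≠ r₂) (hβ₃ : β ≠ r₃) :
    1 / (c * (r₁ - r₂) * (r₁ - r₃) / (ρ + r₁) * (β - r₁))
      + 1 / (c * (r₂ - r₁) * (r₂ - r₃) / (ρ + r₂) * (β - r₂))
      + 1 / (c * (r₃ - r₁) * (r₃ - r₂) / (ρ + r₃) * (β - r₃))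
      = 1 / (c * ((β - r₁) * (β - r₂) * (β - r₃)) / (ρ + β)) := by
  field_simp [sub_ne_zero]
  ring

theorem stmt_6_general (σ μ a ρ q β₀ α Φq : ℝ) (ψ : ℝ → ℝ)
    (hσ : 0 < σ)
    (hψ : ∀ lam : ℝ, ψ lam = σ ^ 2 / 2 * lam ^ 2 + μ * lam - a * lam / (ρ + lam))
    (hβρ : β₀ < -ρ) (hρα : -ρ < α) (hα0 : α < 0) (hΦ : 0 < Φq)
    (hrβ : ψ β₀ = q) (hrα : ψ α = q) (hrΦ : ψ Φq = q)
    (W : ℝ → ℝ)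
    (hW : ∀ x : ℝ, W x = Real.exp (Φq * x) / deriv ψ Φq + Real.exp (α * x) / deriv ψ α +
      Real.exp (β₀ * x) / deriv ψ β₀) :
    ∀ β : ℝ, Φq < β →
      ∫ x in Set.Ioi (0 : ℝ), Real.exp (-β * x) * W x = 1 / (ψ β - q) := by
  intro β hβ
  have hρβ₀ : ρ + β₀ ≠ 0 := by linarith
  have hρα' : ρ + α ≠ 0 := by linarith
  have hρΦ : ρ + Φq ≠ 0 := by linarith
  have hρβ : ρ + β ≠ 0 := by linarith
  have hΦα : Φq ≠ α := by linarith
  have hΦβ₀ : Φq ≠ β₀ := by linarith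
  have hαβ₀ : α ≠ β₀ := by linarith
  have hfac : ∀ x, ρ + x ≠ 0 → ψ x - q = σ ^ 2 / 2 * ((x - Φq) * (x - α) * (x - β₀)) / (ρ + x) :=
    fun x hx => sub_eq_mul_prod_div_of_roots hψ hΦα hΦβ₀ hαβ₀ hρΦ hρα' hρβ₀ hrΦ hrα hrβ hx
  have hdΦ := deriv_eq_of_sub_eq_mul_prod_div hfac hρΦ
  have hdα := deriv_eq_of_sub_eq_mul_prod_div (c := σ ^ 2 / 2) (r₁ := α) (r₂ := Φq) (r₃ := β₀)
    (fun x hx => by rw [hfac x hx]; ring) hρα'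
  have hdβ₀ := deriv_eq_of_sub_eq_mul_prod_div (c := σ ^ 2 / 2) (r₁ := β₀) (r₂ := Φq) (r₃ := α)
    (fun x hx => by rw [hfac x hx]; ring) hρβ₀
  simp_rw [hW]
  rw [integral_Ioi_exp_neg_mul_mul_sum_exp_div hβ (by linarith) (by linarith),
    hdΦ, hdα, hdβ₀, hfac β hρβ]
  exact partial_fractions_of_three_roots (by positivity) hΦα hΦβ₀ hαβ₀ hβ.ne' (by linarith)
    (by linarith)

/-- With the q-scale function
W(x) = e^{Φ(q)x}/ψ'(Φ(q)) + e^{αx}/ψ'(α) + e^{β₀x}/ψ'(β₀), for every real β > Φ(q),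
∫_0^∞ e^{−βx} W(x) dx = 1/(ψ(β) − q). -/
theorem stmt_6 (σ μ a ρ q β₀ α Φq : ℝ) (ψ : ℝ → ℝ)
    (hσ : 0 < σ) (hμ : 0 ≤ μ) (ha : 0 < a) (hρ : 0 < ρ) (hq : 0 < q)
    (hψ : ∀ lam : ℝ, ψ lam = σ ^ 2 / 2 * lam ^ 2 + μ * lam - a * lam / (ρ + lam))
    (hβρ : β₀ < -ρ) (hρα : -ρ < α) (hα0 : α < 0) (hΦ : 0 < Φq)
    (hrβ : ψ β₀ = q) (hrα : ψ α = q) (hrΦ : ψ Φq = q)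
    (hdβ : deriv ψ β₀ ≠ 0) (hdα : deriv ψ α ≠ 0) (hdΦ : deriv ψ Φq ≠ 0)
    (W : ℝ → ℝ)
    (hW : ∀ x : ℝ, W x = Real.exp (Φq * x) / deriv ψ Φq + Real.exp (α * x) / deriv ψ α +
      Real.exp (β₀ * x) / deriv ψ β₀) :
    ∀ β : ℝ, Φq < β →
      ∫ x in Set.Ioi (0 : ℝ), Real.exp (-β * x) * W x = 1 / (ψ β - q) :=
  stmt_6_general σ μ a ρ q β₀ α Φq ψ hσ hψ hβρ hρα hα0 hΦ hrβ hrα hrΦ W hW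
end

section
/- The three real solutions β₀ < −ρ < α < 0 < Φ(q) of ψ(λ) = q satisfy the residue identity 1/(Φ(q)·ψ'(Φ(q))) + 1/(α·ψ'(α)) + 1/(β₀·ψ'(β₀)) = 1/q. -/
/-!
Clearing the denominator, `(ψ λ - q) (ρ + λ)` is a cubic with leading coefficient `σ²/2` vanishing
at the three roots, so it equals `P λ = σ²/2 (λ - β₀)(λ - α)(λ - Φ(q))`. Differentiating at a root `r`
gives `ψ'(r) (ρ + r) = P'(r)`, so the left-hand side is the sum of the residues of
`(ρ + λ) / (λ P λ)` at the roots. This rational function is `O(λ⁻³)` at infinity, so these residues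
sum to minus the residue at `0`, which is `ρ / (σ²/2 · β₀ α Φ(q)) = ρ / (q ρ)` since `P 0 = -q ρ`.
-/

open Filter Topology

theorem cubic_eq_mul_sub_mul_sub_mul_sub {K : Type*} [Field K] {c b d e x y z : K}
    (hxy : x ≠ y) (hxz : x ≠ z) (hyz : y ≠ z)
    (hx : c * x ^ 3 + b * x ^ 2 + d * x + e = 0) (hy : c * y ^ 3 + b * y ^ 2 + d * y + e = 0)
    (hz : c * z ^ 3 + b * z ^ 2 + d * z + e = 0) (t : K) :
    c * t ^ 3 + b * t ^ 2 + d * t + e = c * ((t - x) * (t - y) * (t - z)) := by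
  have hxy' : c * (x ^ 2 + x * y + y ^ 2) + b * (x + y) + d = 0 :=
    (mul_eq_zero.1 (by linear_combination hx - hy : (x - y) * _ = 0)).resolve_left
      (sub_ne_zero.2 hxy)
  have hxz' : c * (x ^ 2 + x * z + z ^ 2) + b * (x + z) + d = 0 :=
    (mul_eq_zero.1 (by linear_combination hx - hz : (x - z) * _ = 0)).resolve_left
      (sub_ne_zero.2 hxz)
  have hsum : c * (x + y + z) + b = 0 :=
    (mul_eq_zero.1 (by linear_combination hxy' - hxz' : (y - z) * _ = 0)).resolve_left
      (sub_ne_zero.2 hyz)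
  linear_combination (t ^ 2 - (x + y) * t - x ^ 2 + x * (x + y)) * hsum + (t - x) * hxy' + hx

theorem linear_div_cubic_residue_sum {K : Type*} [Field K] {u c x y z : K} (hc : c ≠ 0)
    (hx : x ≠ 0) (hy : y ≠ 0) (hz : z ≠ 0) (hxy : x ≠ y) (hxz : x ≠ z) (hyz : y ≠ z) :
    (u + x) / (x * (c * ((x - y) * (x - z)))) + (u + y) / (y * (c * ((y - x) * (y - z))))
      + (u + z) / (z * (c * ((z - x) * (z - y)))) = u / (c * (x * y * z)) := by
  field_simp [sub_ne_zero.2 hxy, sub_ne_zero.2 hxz, sub_ne_zero.2 hyz, sub_ne_zero.2 hxy.symm,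
    sub_ne_zero.2 hxz.symm, sub_ne_zero.2 hyz.symm]
  ring

theorem HasDerivAt.mul_eq_of_eventuallyEq_sub_mul {f g R : ℝ → ℝ} {f' g' R' q r : ℝ}
    (hf : HasDerivAt f f' r) (hg : HasDerivAt g g' r) (hR : HasDerivAt R R' r)
    (hfr : f r = q) (heq : (fun t => (f t - q) * g t) =ᶠ[𝓝 r] fun t => (t - r) * R t) :
    f' * g r = R r := by
  have hl := (hf.sub_const q).mul hg
  have hr := ((hasDerivAt_id r).sub_const r).mul hR
  rw [hfr, sub_self, zero_mul, add_zero] at hl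
  simpa using (hl.congr_of_eventuallyEq heq.symm).unique hr

section LaplaceExponent

variable {σ μ a ρ q : ℝ} {ψ : ℝ → ℝ}

theorem psi_sub_mul_eq_cubic
    (hψ : ∀ lam : ℝ, ψ lam = σ ^ 2 / 2 * lam ^ 2 + μ * lam - a * lam / (ρ + lam))
    {t : ℝ} (ht : ρ + t ≠ 0) :
    (ψ t - q) * (ρ + t) =
      σ ^ 2 / 2 * t ^ 3 + (σ ^ 2 / 2 * ρ + μ) * t ^ 2 + (μ * ρ - a - q) * t + -(q * ρ) := by
  rw [hψ]
  field_simp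
  ring

theorem psi_sub_mul_eq_of_roots
    (hψ : ∀ lam : ℝ, ψ lam = σ ^ 2 / 2 * lam ^ 2 + μ * lam - a * lam / (ρ + lam))
    {x y z : ℝ} (hxy : x ≠ y) (hxz : x ≠ z) (hyz : y ≠ z)
    (hρx : ρ + x ≠ 0) (hρy : ρ + y ≠ 0) (hρz : ρ + z ≠ 0)
    (hx : ψ x = q) (hy : ψ y = q) (hz : ψ z = q) {t : ℝ} (ht : ρ + t ≠ 0) :
    (ψ t - q) * (ρ + t) = σ ^ 2 / 2 * ((t - x) * (t - y) * (t - z)) := by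
  rw [psi_sub_mul_eq_cubic hψ ht]
  refine cubic_eq_mul_sub_mul_sub_mul_sub hxy hxz hyz ?_ ?_ ?_ t
  · rw [← psi_sub_mul_eq_cubic hψ hρx, hx, sub_self, zero_mul]
  · rw [← psi_sub_mul_eq_cubic hψ hρy, hy, sub_self, zero_mul]
  · rw [← psi_sub_mul_eq_cubic hψ hρz, hz, sub_self, zero_mul]

theorem one_div_mul_deriv_psi_of_factor
    (hψ : ∀ lam : ℝ, ψ lam = σ ^ 2 / 2 * lam ^ 2 + μ * lam - a * lam / (ρ + lam))
    {x y z : ℝ} (hρx : ρ + x ≠ 0)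
    (hfac : ∀ t, ρ + t ≠ 0 → (ψ t - q) * (ρ + t) = σ ^ 2 / 2 * ((t - x) * (t - y) * (t - z))) :
    1 / (x * deriv ψ x) = (ρ + x) / (x * (σ ^ 2 / 2 * ((x - y) * (x - z)))) := by
  have hψx : ψ x = q :=
    sub_eq_zero.1 (by simpa [hρx] using hfac x hρx)
  have hdiff : DifferentiableAt ℝ ψ x := by
    rw [funext hψ]
    fun_prop (disch := exact hρx)
  have hderiv : deriv ψ x * (ρ + x) = σ ^ 2 / 2 * ((x - y) * (x - z)) := by
    have hR : Differentiable ℝ fun t => σ ^ 2 / 2 * ((t - y) * (t - z)) := by fun_prop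
    have hopen : IsOpen {t : ℝ | ρ + t ≠ 0} := isOpen_ne_fun (by fun_prop) continuous_const
    refine hdiff.hasDerivAt.mul_eq_of_eventuallyEq_sub_mul ((hasDerivAt_id' x).const_add ρ)
      (hR x).hasDerivAt hψx ?_
    filter_upwards [hopen.mem_nhds hρx] with t ht
    rw [hfac t ht]
    ring
  rw [← hderiv, ← mul_assoc, mul_comm (x * deriv ψ x), div_mul_cancel_left₀ hρx, one_div]

end LaplaceExponent

theorem stmt_9_general (σ μ a ρ q β₀ α Φq : ℝ) (ψ : ℝ → ℝ)
    (hσ : 0 < σ)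
    (hψ : ∀ lam : ℝ, ψ lam = σ ^ 2 / 2 * lam ^ 2 + μ * lam - a * lam / (ρ + lam))
    (hβρ : β₀ < -ρ) (hρα : -ρ < α) (hα0 : α < 0) (hΦ : 0 < Φq)
    (hrβ : ψ β₀ = q) (hrα : ψ α = q) (hrΦ : ψ Φq = q) :
    1 / (Φq * deriv ψ Φq) + 1 / (α * deriv ψ α) + 1 / (β₀ * deriv ψ β₀) = 1 / q := by
  have hρ : ρ ≠ 0 := by linarith
  have hfac : ∀ t, ρ + t ≠ 0 →
      (ψ t - q) * (ρ + t) = σ ^ 2 / 2 * ((t - Φq) * (t - α) * (t - β₀)) :=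
    fun t => psi_sub_mul_eq_of_roots hψ (by linarith) (by linarith) (by linarith)
      (by linarith) (by linarith) (by linarith) hrΦ hrα hrβ
  have hprod : σ ^ 2 / 2 * (Φq * α * β₀) = q * ρ := by
    simpa [hψ] using (hfac 0 (by simpa using hρ)).symm
  rw [one_div_mul_deriv_psi_of_factor hψ (by linarith) hfac,
    one_div_mul_deriv_psi_of_factor (y := Φq) (z := β₀) hψ (by linarith)
      fun t ht => (hfac t ht).trans (by ring),
    one_div_mul_deriv_psi_of_factor (y := Φq) (z := α) hψ (by linarith)
      fun t ht => (hfac t ht).trans (by ring),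
    linear_div_cubic_residue_sum (by positivity) hΦ.ne' hα0.ne (by linarith) (by linarith)
      (by linarith) (by linarith), hprod, div_mul_cancel_right₀ hρ, one_div]

/-- The three real solutions β₀ < −ρ < α < 0 < Φ(q) of ψ(λ) = q
(all nonzero, with ψ' nonzero at each of them) satisfy the residue identity
1/(Φ(q)ψ'(Φ(q))) + 1/(αψ'(α)) + 1/(β₀ψ'(β₀)) = 1/q. -/
theorem stmt_9 (σ μ a ρ q β₀ α Φq : ℝ) (ψ : ℝ → ℝ)
    (hσ : 0 < σ) (hμ : 0 ≤ μ) (ha : 0 < a) (hρ : 0 < ρ) (hq : 0 < q)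
    (hψ : ∀ lam : ℝ, ψ lam = σ ^ 2 / 2 * lam ^ 2 + μ * lam - a * lam / (ρ + lam))
    (hβρ : β₀ < -ρ) (hρα : -ρ < α) (hα0 : α < 0) (hΦ : 0 < Φq)
    (hrβ : ψ β₀ = q) (hrα : ψ α = q) (hrΦ : ψ Φq = q)
    (hdβ : deriv ψ β₀ ≠ 0) (hdα : deriv ψ α ≠ 0) (hdΦ : deriv ψ Φq ≠ 0) :
    1 / (Φq * deriv ψ Φq) + 1 / (α * deriv ψ α) + 1 / (β₀ * deriv ψ β₀) = 1 / q :=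
  stmt_9_general σ μ a ρ q β₀ α Φq ψ hσ hψ hβρ hρα hα0 hΦ hrβ hrα hrΦ
end
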